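/- Being 'unlinked' is a symmetric relation on pairs of disjoint finite subsets of the circle ℝ/ℤ: if A and B are disjoint finite subsets of ℝ/ℤ such that B is contained in the closure of a single connected component of ℝ/ℤ ∖ A, then A is contained in the closure of a single connected component of ℝ/ℤ ∖ B. -/
import Mathlib

open Set

/-- Every point of the circle has a representative in `Ico t₀ (t₀+1)`. -/
private lemma circle_rep (t₀ : ℝ) (z : AddCircle (1 : ℝ)) :
    ∃ t : ℝ, t ∈ Ico t₀ (t₀ + 1) ∧ (t : AddCircle (1 : ℝ)) = z := by
  obtain ⟨s, rfl⟩ := QuotientAddGroup.mk_surjective z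
  refine ⟨toIcoMod one_pos t₀ s, toIcoMod_mem_Ico one_pos t₀ s, ?_⟩
  rw [QuotientAddGroup.eq, neg_add_eq_sub, self_sub_toIcoMod]
  exact AddSubgroup.zsmul_mem_zmultiples _ _

private lemma circle_inj {t₀ x y : ℝ} (hx : x ∈ Ico t₀ (t₀ + 1))
    (hy : y ∈ Ico t₀ (t₀ + 1)) (h : (x : AddCircle (1 : ℝ)) = y) : x = y :=
  (AddCircle.coe_eq_coe_iff_of_mem_Ico hx hy).1 h

/-- The complement of a preconnected proper subset of the circle is preconnected. -/
private lemma compl_preconnected {S : Set (AddCircle (1 : ℝ))} (hS : IsPreconnected S)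
    {a : AddCircle (1 : ℝ)} (ha : a ∉ S) : IsPreconnected Sᶜ := by
  obtain ⟨t₀, rfl⟩ : ∃ t₀ : ℝ, ((t₀ : AddCircle (1 : ℝ)) = a) :=
    QuotientAddGroup.mk_surjective a
  have hcont : Continuous ((↑) : ℝ → AddCircle (1 : ℝ)) := continuous_quotient_mk'
  have hopen : IsOpenMap ((↑) : ℝ → AddCircle (1 : ℝ)) := QuotientAddGroup.isOpenMap_coe
  have hper : ((t₀ + 1 : ℝ) : AddCircle (1 : ℝ)) = (t₀ : ℝ) := AddCircle.coe_add_period 1 t₀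
  set I : Set ℝ := {t : ℝ | t ∈ Ioo t₀ (t₀ + 1) ∧ ((t : AddCircle (1 : ℝ)) ∈ S)} with hI
  -- I is order-connected
  have ordI : ∀ x ∈ I, ∀ y ∈ I, ∀ z : ℝ, x ≤ z → z ≤ y → z ∈ I := by
    intro x hx y hy z hxz hzy
    have hzIoo : z ∈ Ioo t₀ (t₀ + 1) := ⟨lt_of_lt_of_le hx.1.1 hxz, lt_of_le_of_lt hzy hy.1.2⟩
    refine ⟨hzIoo, ?_⟩
    by_contra hzS
    rcases eq_or_lt_of_le hxz with rfl | hxz'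
    · exact hzS hx.2
    rcases eq_or_lt_of_le hzy with rfl | hzy'
    · exact hzS hy.2
    -- separate S by two open arcs
    set U : Set (AddCircle (1 : ℝ)) := ((↑) : ℝ → AddCircle (1 : ℝ)) '' Ioo t₀ z with hU
    set V : Set (AddCircle (1 : ℝ)) := ((↑) : ℝ → AddCircle (1 : ℝ)) '' Ioo z (t₀ + 1) with hV
    have hsub : S ⊆ U ∪ V := by
      intro w hw
      obtain ⟨t, ht, rfl⟩ := circle_rep t₀ w
      have ht0 : t ≠ t₀ := by rintro rfl; exact ha hw
      have htIoo : t ∈ Ioo t₀ (t₀ + 1) := ⟨lt_of_le_of_ne ht.1 (Ne.symm ht0), ht.2⟩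
      have htz : t ≠ z := by rintro rfl; exact hzS hw
      rcases lt_or_gt_of_ne htz with h' | h'
      · exact Or.inl ⟨t, ⟨htIoo.1, h'⟩, rfl⟩
      · exact Or.inr ⟨t, ⟨h', htIoo.2⟩, rfl⟩
    obtain ⟨w, hwS, hwU, hwV⟩ :=
      hS U V (hopen _ isOpen_Ioo) (hopen _ isOpen_Ioo) hsub
        ⟨(x : AddCircle (1 : ℝ)), hx.2, ⟨x, ⟨hx.1.1, hxz'⟩, rfl⟩⟩
        ⟨(y : AddCircle (1 : ℝ)), hy.2, ⟨y, ⟨hzy', hy.1.2⟩, rfl⟩⟩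
    obtain ⟨u, hu, rfl⟩ := hwU
    obtain ⟨v, hv, hv'⟩ := hwV
    have hu' : u ∈ Ico t₀ (t₀ + 1) := ⟨le_of_lt hu.1, lt_trans hu.2 hzIoo.2⟩
    have hv'' : v ∈ Ico t₀ (t₀ + 1) := ⟨le_of_lt (lt_trans hzIoo.1 hv.1), hv.2⟩
    have := circle_inj hv'' hu' hv'
    have : v < v := lt_trans (this ▸ hu.2) hv.1
    exact absurd this (lt_irrefl v)
  -- The two complementary closed pieces
  set L : Set ℝ := {t : ℝ | t ∈ Icc t₀ (t₀ + 1) ∧ ((t : AddCircle (1 : ℝ)) ∉ S) ∧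
      ∀ y ∈ I, t ≤ y} with hL
  set R : Set ℝ := {t : ℝ | t ∈ Icc t₀ (t₀ + 1) ∧ ((t : AddCircle (1 : ℝ)) ∉ S) ∧
      ∀ y ∈ I, y ≤ t} with hR
  have hbd : ∀ z : ℝ, z ∈ Icc t₀ (t₀ + 1) → z ∉ Ioo t₀ (t₀ + 1) →
      ((z : AddCircle (1 : ℝ)) ∉ S) := by
    intro z hz hz'
    rcases eq_or_lt_of_le hz.1 with rfl | h1
    · exact ha
    rcases eq_or_lt_of_le hz.2 with rfl | h2
    · rw [hper]; exact ha
    · exact absurd ⟨h1, h2⟩ hz'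
  have hLord : OrdConnected L := by
    constructor
    intro x hx y hy z hz
    have hzIcc : z ∈ Icc t₀ (t₀ + 1) := ⟨hx.1.1.trans hz.1, hz.2.trans hy.1.2⟩
    refine ⟨hzIcc, ?_, fun w hw => (hz.2.trans (hy.2.2 w hw))⟩
    intro hzS
    by_cases hzo : z ∈ Ioo t₀ (t₀ + 1)
    · have hzI : z ∈ I := ⟨hzo, hzS⟩
      have : y ≤ z := hy.2.2 z hzI
      have : z = y := le_antisymm hz.2 this
      exact hy.2.1 (this ▸ hzS)
    · exact hbd z hzIcc hzo hzS
  have hRord : OrdConnected R := by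
    constructor
    intro x hx y hy z hz
    have hzIcc : z ∈ Icc t₀ (t₀ + 1) := ⟨hx.1.1.trans hz.1, hz.2.trans hy.1.2⟩
    refine ⟨hzIcc, ?_, fun w hw => ((hx.2.2 w hw).trans hz.1)⟩
    intro hzS
    by_cases hzo : z ∈ Ioo t₀ (t₀ + 1)
    · have hzI : z ∈ I := ⟨hzo, hzS⟩
      have : z ≤ x := hx.2.2 z hzI
      have : z = x := le_antisymm this hz.1
      exact hx.2.1 (this ▸ hzS)
    · exact hbd z hzIcc hzo hzS
  have ht₀L : t₀ ∈ L :=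
    ⟨⟨le_refl _, by linarith⟩, ha, fun y hy => le_of_lt hy.1.1⟩
  have ht₁R : (t₀ + 1) ∈ R :=
    ⟨⟨by linarith, le_refl _⟩, by rw [hper]; exact ha, fun y hy => le_of_lt hy.1.2⟩
  have key : Sᶜ = (((↑) : ℝ → AddCircle (1 : ℝ)) '' L) ∪ (((↑) : ℝ → AddCircle (1 : ℝ)) '' R) := by
    apply Subset.antisymm
    · intro w hw
      obtain ⟨t, ht, rfl⟩ := circle_rep t₀ w
      by_cases hall : ∀ y ∈ I, t ≤ y
      · exact Or.inl ⟨t, ⟨⟨ht.1, le_of_lt ht.2⟩, hw, hall⟩, rfl⟩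
      · push_neg at hall
        obtain ⟨y₁, hy₁, hy₁t⟩ := hall
        refine Or.inr ⟨t, ⟨⟨ht.1, le_of_lt ht.2⟩, hw, ?_⟩, rfl⟩
        intro y hy
        by_contra hty
        push_neg at hty
        have : t ∈ I := ordI y₁ hy₁ y hy t (le_of_lt hy₁t) (le_of_lt hty)
        exact hw this.2
    · rintro w (⟨t, ht, rfl⟩ | ⟨t, ht, rfl⟩)
      · exact ht.2.1
      · exact ht.2.1
  rw [key]
  have hLpre : IsPreconnected (((↑) : ℝ → AddCircle (1 : ℝ)) '' L) :=
    hLord.isPreconnected.image _ hcont.continuousOn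
  have hRpre : IsPreconnected (((↑) : ℝ → AddCircle (1 : ℝ)) '' R) :=
    hRord.isPreconnected.image _ hcont.continuousOn
  exact IsPreconnected.union ((t₀ : ℝ) : AddCircle (1 : ℝ))
    ⟨t₀, ht₀L, rfl⟩ ⟨t₀ + 1, ht₁R, hper⟩ hLpre hRpre

/-- `UnlinkedIn A B` : B is contained in the closure of a single connected
component of the complement of A in the circle ℝ/ℤ. -/
def UnlinkedIn (A B : Set (AddCircle (1 : ℝ))) : Prop :=
  ∃ x ∈ Aᶜ, B ⊆ closure (connectedComponentIn Aᶜ x)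

/-- Being unlinked is symmetric for disjoint finite subsets of the circle. -/
theorem unlinked_symm (A B : Finset (AddCircle (1 : ℝ))) (hAB : Disjoint A B)
    (h : UnlinkedIn (A : Set (AddCircle (1 : ℝ))) (B : Set (AddCircle (1 : ℝ)))) :
    UnlinkedIn (B : Set (AddCircle (1 : ℝ))) (A : Set (AddCircle (1 : ℝ))) := by
  rcases A.eq_empty_or_nonempty with rfl | ⟨a, ha⟩
  · -- A is empty: just pick any point not in B
    have hinf : Infinite (AddCircle (1 : ℝ)) := by
      refine Infinite.of_injective (fun t : Set.Ico (0 : ℝ) 1 => ((t : ℝ) : AddCircle (1 : ℝ)))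
        fun u v huv => ?_
      have hu : (u : ℝ) ∈ Ico (0 : ℝ) (0 + 1) := by rw [zero_add]; exact u.2
      have hv : (v : ℝ) ∈ Ico (0 : ℝ) (0 + 1) := by rw [zero_add]; exact v.2
      exact Subtype.ext (circle_inj hu hv huv)
    obtain ⟨x, hx⟩ := (B.finite_toSet.infinite_compl).nonempty
    exact ⟨x, hx, by simp⟩
  · obtain ⟨x, hx, hB⟩ := h
    set C := connectedComponentIn ((A : Set (AddCircle (1 : ℝ)))ᶜ) x with hC
    have hCsub : C ⊆ (A : Set (AddCircle (1 : ℝ)))ᶜ := connectedComponentIn_subset _ _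
    have haA : a ∈ (A : Set (AddCircle (1 : ℝ))) := ha
    have haC : a ∉ C := fun hc => hCsub hc haA
    -- B ⊆ C
    have hBC : (B : Set (AddCircle (1 : ℝ))) ⊆ C := by
      intro b hb
      have hbA : b ∈ (A : Set (AddCircle (1 : ℝ)))ᶜ := by
        intro hbA'
        exact (Finset.disjoint_left.1 hAB) hbA' hb
      have hbcl : b ∈ closure C := hB hb
      rw [hC, connectedComponentIn_eq_image hx] at hbcl ⊢
      have : (⟨b, hbA⟩ : ((A : Set (AddCircle (1 : ℝ)))ᶜ : Set _)) ∈
          closure (connectedComponent (⟨x, hx⟩ : ((A : Set (AddCircle (1 : ℝ)))ᶜ : Set _))) :=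
        closure_subtype.2 hbcl
      rw [isClosed_connectedComponent.closure_eq] at this
      exact ⟨⟨b, hbA⟩, this, rfl⟩
    -- the complement of C is preconnected
    have hCpre : IsPreconnected Cᶜ :=
      compl_preconnected isPreconnected_connectedComponentIn haC
    have haB : a ∈ (B : Set (AddCircle (1 : ℝ)))ᶜ := by
      intro hab
      exact (Finset.disjoint_left.1 hAB) ha hab
    have hCB : Cᶜ ⊆ (B : Set (AddCircle (1 : ℝ)))ᶜ := compl_subset_compl.2 hBC
    have hsub : Cᶜ ⊆ connectedComponentIn ((B : Set (AddCircle (1 : ℝ)))ᶜ) a :=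
      hCpre.subset_connectedComponentIn haC hCB
    refine ⟨a, haB, fun w hw => subset_closure (hsub ?_)⟩
    exact fun hwC => hCsub hwC hw
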